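/- For every d ≥ 1 and every 0 ≤ k ≤ d, g_0([W_{d,k}, 2d]) = k·[W_{d−1,k−1}, 2(d−1)] + z·(d−k)·[W_{d−1,k}, 2(d−1)] in Markov(⊔S_{d−1}B), with the convention that a term whose integer coefficient vanishes is omitted. -/

import Mathlib

open scoped TensorProduct DirectSum

set_option synthInstance.maxHeartbeats 1000000
set_option maxHeartbeats 2000000

namespace SingularHOMFLYPT

/-- Generators of the singular braid monoid on `n` strands: `pos i` is `σ_{i+1}`,
`neg i` is `σ_{i+1}⁻¹` and `tau i` is `τ_{i+1}`, for `i : Fin (n-1)`. -/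
inductive SBGen (n : ℕ) : Type
  | pos : Fin (n - 1) → SBGen n
  | neg : Fin (n - 1) → SBGen n
  | tau : Fin (n - 1) → SBGen n

open FreeMonoid in
/-- The defining relations of the singular braid monoid `SB_n` (Baez, Birman). -/
inductive SBRel (n : ℕ) : FreeMonoid (SBGen n) → FreeMonoid (SBGen n) → Prop
  | inv_right (i : Fin (n - 1)) : SBRel n (of (.pos i) * of (.neg i)) 1
  | inv_left (i : Fin (n - 1)) : SBRel n (of (.neg i) * of (.pos i)) 1
  | sigma_tau (i : Fin (n - 1)) :
      SBRel n (of (.pos i) * of (.tau i)) (of (.tau i) * of (.pos i))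
  | braid (i j : Fin (n - 1)) (h : (i : ℕ) + 1 = j ∨ (j : ℕ) + 1 = i) :
      SBRel n (of (.pos i) * of (.pos j) * of (.pos i))
        (of (.pos j) * of (.pos i) * of (.pos j))
  | braid_tau (i j : Fin (n - 1)) (h : (i : ℕ) + 1 = j ∨ (j : ℕ) + 1 = i) :
      SBRel n (of (.pos i) * of (.pos j) * of (.tau i))
        (of (.tau j) * of (.pos i) * of (.pos j))
  | comm_ss (i j : Fin (n - 1)) (h : (i : ℕ) + 2 ≤ j ∨ (j : ℕ) + 2 ≤ i) :
      SBRel n (of (.pos i) * of (.pos j)) (of (.pos j) * of (.pos i))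
  | comm_st (i j : Fin (n - 1)) (h : (i : ℕ) + 2 ≤ j ∨ (j : ℕ) + 2 ≤ i) :
      SBRel n (of (.pos i) * of (.tau j)) (of (.tau j) * of (.pos i))
  | comm_tt (i j : Fin (n - 1)) (h : (i : ℕ) + 2 ≤ j ∨ (j : ℕ) + 2 ≤ i) :
      SBRel n (of (.tau i) * of (.tau j)) (of (.tau j) * of (.tau i))

/-- The congruence on the free monoid generated by the singular braid relations. -/
def SBcon (n : ℕ) : Con (FreeMonoid (SBGen n)) := conGen (SBRel n)

/-- The singular braid monoid on `n` strands, as a presented monoid. -/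
abbrev SB (n : ℕ) : Type := (SBcon n).Quotient

/-- The canonical projection from the free monoid onto `SB n`. -/
def SB.mk {n : ℕ} : FreeMonoid (SBGen n) →* SB n := Con.mk' (SBcon n)

/-- The generator `σ_{i+1}` of `SB n`. -/
def sG {n : ℕ} (i : Fin (n - 1)) : SB n := SB.mk (.of (.pos i))

/-- The generator `σ_{i+1}⁻¹` of `SB n`. -/
def sInvG {n : ℕ} (i : Fin (n - 1)) : SB n := SB.mk (.of (.neg i))

/-- The generator `τ_{i+1}` of `SB n`. -/
def tauG {n : ℕ} (i : Fin (n - 1)) : SB n := SB.mk (.of (.tau i))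

theorem SB.sound {n : ℕ} {a b : FreeMonoid (SBGen n)} (h : SBRel n a b) :
    SB.mk a = SB.mk b :=
  Con.eq _ |>.2 (ConGen.Rel.of a b h)

/-- Lift a map on generators to a monoid homomorphism on `SB n`. -/
def SB.lift {n : ℕ} {M : Type*} [Monoid M] (f : SBGen n → M)
    (h : ∀ a b, SBRel n a b → FreeMonoid.lift f a = FreeMonoid.lift f b) :
    SB n →* M :=
  Con.lift _ (FreeMonoid.lift f)
    (Con.conGen_le.2 fun a b hab => (Con.ker_rel _).2 (h a b hab))

@[simp] theorem SB.lift_mk {n : ℕ} {M : Type*} [Monoid M] (f : SBGen n → M)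
    (h : ∀ a b, SBRel n a b → FreeMonoid.lift f a = FreeMonoid.lift f b)
    (w : FreeMonoid (SBGen n)) :
    SB.lift f h (SB.mk w) = FreeMonoid.lift f w :=
  Con.lift_coe _ w

/-- The number of singular points (`τ`-letters) of a generator. -/
def degGen {n : ℕ} : SBGen n → Multiplicative ℕ
  | .tau _ => Multiplicative.ofAdd 1
  | _ => 1

/-- The monoid homomorphism `deg : SB n →* (ℕ, +)` counting singular points. -/
def degM {n : ℕ} : SB n →* Multiplicative ℕ :=
  SB.lift degGen (by
    rintro a b h
    cases h <;> simp [degGen, mul_comm])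
/-- Shifting generators by `k`, viewing `SB n` inside `SB N` (strands `k+1, …, k+n`). -/
def shiftGen {n : ℕ} (N k : ℕ) (h : k + n ≤ N) : SBGen n → SBGen N
  | .pos i => .pos ⟨k + i, by have := i.2; omega⟩
  | .neg i => .neg ⟨k + i, by have := i.2; omega⟩
  | .tau i => .tau ⟨k + i, by have := i.2; omega⟩

theorem shiftGen_rel {n : ℕ} (N k : ℕ) (h : k + n ≤ N) {a b : FreeMonoid (SBGen n)}
    (hab : SBRel n a b) :
    SBRel N (FreeMonoid.map (shiftGen N k h) a) (FreeMonoid.map (shiftGen N k h) b) := by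
  cases hab <;>
    simp only [map_mul, map_one, FreeMonoid.map_of, shiftGen] <;>
    first
      | exact SBRel.inv_right _
      | exact SBRel.inv_left _
      | exact SBRel.sigma_tau _
      | (rename_i i j hij; exact SBRel.braid _ _ (by simp; omega))
      | (rename_i i j hij; first
          | exact SBRel.braid_tau _ _ (by simp; omega)
          | exact SBRel.comm_ss _ _ (by simp; omega)
          | exact SBRel.comm_st _ _ (by simp; omega)
          | exact SBRel.comm_tt _ _ (by simp; omega))

/-- The monoid homomorphism `SB n →* SB N` placing a braid on the strands `k+1, …, k+n`. -/
def shiftHom {n : ℕ} (N k : ℕ) (h : k + n ≤ N) : SB n →* SB N :=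
  Con.lift _ (SB.mk.comp (FreeMonoid.map (shiftGen N k h)))
    (Con.conGen_le.2 fun a b hab => (Con.ker_rel _).2 (SB.sound (shiftGen_rel N k h hab)))

/-- The natural inclusion `SB n →* SB N` (adding trivial strands on the right). -/
def inclSB {n : ℕ} (N : ℕ) (h : n ≤ N) : SB n →* SB N := shiftHom N 0 (by omega)

/-- `α ∗ β`: the braid obtained by placing `β` (on `m` strands) above (to the right of)
`α` (on `n` strands), realized in `SB N` for `n + m ≤ N`. -/
def starIn {n m : ℕ} (N : ℕ) (h : n + m ≤ N) (α : SB n) (β : SB m) : SB N :=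
  inclSB N (by omega) α * shiftHom N n h β
@[simp] theorem shiftHom_mk {n : ℕ} (N k : ℕ) (h : k + n ≤ N) (w : FreeMonoid (SBGen n)) :
    shiftHom N k h (SB.mk w) = SB.mk (FreeMonoid.map (shiftGen N k h) w) :=
  Con.lift_coe _ w

theorem shiftHom_sG {n : ℕ} (N k : ℕ) (h : k + n ≤ N) (i : Fin (n - 1)) :
    shiftHom N k h (sG i) = sG ⟨k + i.1, by have := i.2; omega⟩ := rfl

theorem inclSB_sG {n : ℕ} (N : ℕ) (h : n ≤ N) (i : Fin (n - 1)) :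
    inclSB N h (sG i) = sG ⟨0 + i.1, by have := i.2; omega⟩ := rfl

noncomputable section

/-- The field `ℂ(q)` of rational functions over `ℂ` in the variable `q`. -/
abbrev Kq : Type := RatFunc ℂ

/-- The field `ℂ(q,z) = ℂ(q)(z)` of rational functions over `ℂ` in the variables `q, z`. -/
abbrev Lqz : Type := RatFunc Kq

/-- The variable `q`, as an element of `ℂ(q)`. -/
def qK : Kq := RatFunc.X

/-- The variable `z`, as an element of `ℂ(q,z)`. -/
def zL : Lqz := RatFunc.X

/-- The variable `q`, as an element of `ℂ(q,z)`. -/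
def qL : Lqz := algebraMap Kq Lqz qK

/-- The Hecke relations `σ_k² = (q-1)σ_k + q` in the monoid algebra `ℂ(q)[SB_n]`. -/
def HeckeRel (n : ℕ) : MonoidAlgebra Kq (SB n) → MonoidAlgebra Kq (SB n) → Prop :=
  fun x y => ∃ i : Fin (n - 1),
    x = MonoidAlgebra.of Kq (SB n) (sG i) ^ 2 ∧
    y = (qK - 1) • MonoidAlgebra.of Kq (SB n) (sG i) + qK • 1

/-- The singular Hecke algebra `H(SB_n)`: the quotient of `ℂ(q)[SB_n]` by the two-sided
ideal generated by the elements `σ_k² - (q-1)σ_k - q`. -/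
abbrev Hecke (n : ℕ) : Type := RingQuot (HeckeRel n)

/-- The image of a singular braid in the singular Hecke algebra. -/
def heckeOf {n : ℕ} (β : SB n) : Hecke n :=
  RingQuot.mkAlgHom Kq (HeckeRel n) (MonoidAlgebra.of Kq (SB n) β)

/-- `H_z(SB_n) := ℂ(q,z) ⊗_{ℂ(q)} H(SB_n)`. -/
abbrev HeckeZ (n : ℕ) : Type := Lqz ⊗[Kq] Hecke n

/-- The image of a singular braid in `H_z(SB_n)`. -/
def ofHZ {n : ℕ} (β : SB n) : HeckeZ n := (1 : Lqz) ⊗ₜ[Kq] heckeOf β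

/-- The algebra homomorphism `H(SB_n) → H(SB_{n+1})` induced by the natural inclusion
`SB_n ↪ SB_{n+1}`. -/
def heckeIncl (n : ℕ) : Hecke n →ₐ[Kq] Hecke (n + 1) :=
  RingQuot.liftAlgHom Kq
    ⟨((RingQuot.mkAlgHom Kq (HeckeRel (n + 1))).comp
        (MonoidAlgebra.mapDomainAlgHom Kq Kq (inclSB (n + 1) (Nat.le_succ n)))),
      by
        rintro x y ⟨i, rfl, rfl⟩
        have hi := i.2
        set i' : Fin ((n + 1) - 1) := ⟨0 + i.1, by omega⟩ with hi'
        have hgen : (MonoidAlgebra.mapDomainAlgHom Kq Kq (inclSB (n + 1) (Nat.le_succ n)))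
            (MonoidAlgebra.of Kq (SB n) (sG i)) = MonoidAlgebra.of Kq (SB (n + 1)) (sG i') := by
          rw [MonoidAlgebra.of_apply, MonoidAlgebra.mapDomainAlgHom_apply,
            MonoidAlgebra.mapDomain_single, inclSB_sG, MonoidAlgebra.of_apply]
        have hrel : HeckeRel (n + 1) (MonoidAlgebra.of Kq (SB (n + 1)) (sG i') ^ 2)
            ((qK - 1) • MonoidAlgebra.of Kq (SB (n + 1)) (sG i') + qK • 1) := ⟨i', rfl, rfl⟩
        have hmk := RingQuot.mkAlgHom_rel Kq hrel
        simp only [map_pow, map_add, map_smul, map_one] at hmk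
        simp only [AlgHom.coe_comp, Function.comp_apply, map_pow, map_add, map_smul, map_one,
          hgen]
        exact hmk⟩

/-- The algebra homomorphism `ι_n : H_z(SB_n) → H_z(SB_{n+1})`. -/
def iotaHZ (n : ℕ) : HeckeZ n →ₐ[Lqz] HeckeZ (n + 1) :=
  Algebra.TensorProduct.map (AlgHom.id Lqz Lqz) (heckeIncl n)
/-- The `ℂ(q)`-subspace `H(S_dB_n)` of the singular Hecke algebra spanned by the images of
the singular braids with `d` singular points. -/
def HSd (n d : ℕ) : Submodule Kq (Hecke n) :=
  Submodule.span Kq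
    {x | ∃ β : SB n, degM β = Multiplicative.ofAdd d ∧ x = heckeOf β}

/-- The `ℂ(q,z)`-subspace `H_z(S_dB_n)` of `H_z(SB_n)` spanned by the images of the singular
braids with `d` singular points. -/
def HzSd (n d : ℕ) : Submodule Lqz (HeckeZ n) :=
  Submodule.span Lqz
    {x | ∃ β : SB n, degM β = Multiplicative.ofAdd d ∧ x = ofHZ β}

/-- Strand counts: the positive natural numbers. -/
abbrev Idx : Type := {n : ℕ // 0 < n}

/-- The direct sum `⊕_{n ≥ 1} H_z(SB_n)`. -/
abbrev MV : Type := ⨁ i : Idx, HeckeZ i.1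

instance instAddCommGroupHeckeZ (n : ℕ) : AddCommGroup (HeckeZ n) := inferInstance
instance instModuleHeckeZ (n : ℕ) : Module Lqz (HeckeZ n) := inferInstance
instance instAddCommGroupMV : AddCommGroup MV := inferInstance
instance instModuleMV : Module Lqz MV := inferInstance

/-- The canonical inclusion of the `n`-th summand of `⊕_{n ≥ 1} H_z(SB_n)`. -/
def mvof (i : Idx) : HeckeZ i.1 →ₗ[Lqz] MV :=
  DirectSum.lof Lqz Idx (fun i => HeckeZ i.1) i

/-- Successor of a strand count. -/
def succI (i : Idx) : Idx := ⟨i.1 + 1, Nat.succ_pos _⟩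

/-- The generator `σ_n` of `SB_{n+1}`. -/
def sigmaLast (i : Idx) : SB (i.1 + 1) := sG ⟨i.1 - 1, Nat.sub_lt i.2 one_pos⟩

/-- The Markov relations in `⊕_{n ≥ 1} H_z(SB_n)`: trace relations, stabilization relations
and positive Markov relations. -/
def markovRels : Set MV :=
  {x | ∃ (i : Idx) (a b : HeckeZ i.1), x = mvof i (a * b) - mvof i (b * a)} ∪
  {x | ∃ (i : Idx) (a : HeckeZ i.1), x = mvof i a - mvof (succI i) (iotaHZ i.1 a)} ∪
  {x | ∃ (i : Idx) (a : HeckeZ i.1),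
    x = mvof (succI i) (iotaHZ i.1 a * ofHZ (sigmaLast i)) - zL • mvof i a}

/-- The Markov module `Markov(⊔SB)`. -/
abbrev Markov : Type := MV ⧸ Submodule.span Lqz markovRels

instance instAddCommGroupMarkov : AddCommGroup Markov := inferInstance
instance instModuleMarkov : Module Lqz Markov := inferInstance

/-- The class `[a, m]` in the Markov module of an element `a ∈ H_z(SB_m)`. -/
def markovClass (m : ℕ) (hm : 0 < m) (a : HeckeZ m) : Markov :=
  Submodule.Quotient.mk (mvof ⟨m, hm⟩ a)

/-- The class `[β, m]` in the Markov module of a singular braid `β ∈ SB_m`. -/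
def braidClass (m : ℕ) (hm : 0 < m) (β : SB m) : Markov :=
  markovClass m hm (ofHZ β)

/-- The direct sum `⊕_{n ≥ 1} H_z(S_dB_n)`. -/
abbrev MVD (d : ℕ) : Type := ⨁ i : Idx, ↥(HzSd i.1 d)

instance instAddCommGroupMVD (d : ℕ) : AddCommGroup (MVD d) := inferInstance
instance instModuleMVD (d : ℕ) : Module Lqz (MVD d) := inferInstance

/-- The canonical inclusion of the `n`-th summand of `⊕_{n ≥ 1} H_z(S_dB_n)`. -/
def mvdof (d : ℕ) (i : Idx) : ↥(HzSd i.1 d) →ₗ[Lqz] MVD d :=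
  DirectSum.lof Lqz Idx (fun i => ↥(HzSd i.1 d)) i

/-- The Markov relations in `⊕_{n ≥ 1} H_z(S_dB_n)`. -/
def markovRelsD (d : ℕ) : Set (MVD d) :=
  {x | ∃ (i : Idx) (k l : ℕ), k + l = d ∧ ∃ (a b : HeckeZ i.1),
    a ∈ HzSd i.1 k ∧ b ∈ HzSd i.1 l ∧
    ∃ (hab : a * b ∈ HzSd i.1 d) (hba : b * a ∈ HzSd i.1 d),
      x = mvdof d i ⟨a * b, hab⟩ - mvdof d i ⟨b * a, hba⟩} ∪
  {x | ∃ (i : Idx) (a : HeckeZ i.1) (ha : a ∈ HzSd i.1 d)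
      (ha' : iotaHZ i.1 a ∈ HzSd (i.1 + 1) d),
    x = mvdof d i ⟨a, ha⟩ - mvdof d (succI i) ⟨iotaHZ i.1 a, ha'⟩} ∪
  {x | ∃ (i : Idx) (a : HeckeZ i.1) (ha : a ∈ HzSd i.1 d)
      (ha' : iotaHZ i.1 a * ofHZ (sigmaLast i) ∈ HzSd (i.1 + 1) d),
    x = mvdof d (succI i) ⟨iotaHZ i.1 a * ofHZ (sigmaLast i), ha'⟩ - zL • mvdof d i ⟨a, ha⟩}

/-- The `d`-th Markov module `Markov(⊔S_dB)`. -/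
abbrev MarkovD (d : ℕ) : Type := MVD d ⧸ Submodule.span Lqz (markovRelsD d)

instance instAddCommGroupMarkovD (d : ℕ) : AddCommGroup (MarkovD d) := inferInstance
instance instModuleMarkovD (d : ℕ) : Module Lqz (MarkovD d) := inferInstance

/-- The class `[β, m]` in the `d`-th Markov module of a singular braid `β ∈ S_dB_m`
(defined to be `0` if `β` does not have exactly `d` singular points). -/
def classD (d m : ℕ) (hm : 0 < m) (β : SB m) : MarkovD d :=
  if h : degM β = Multiplicative.ofAdd d then
    Submodule.Quotient.mk (mvdof d ⟨m, hm⟩ ⟨ofHZ β, Submodule.subset_span ⟨β, h, rfl⟩⟩)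
  else 0
/-- The singular braid `W_{d,k} = τ_1 τ_3 ⋯ τ_{2k-1} (τ_{2k+1}σ_{2k+1}) ⋯ (τ_{2d-1}σ_{2d-1})`
in `SB_{2d}` (for `1 ≤ d` and `k ≤ d`). -/
def W (d k : ℕ) : SB (2 * d) :=
  ((List.range d).map (fun j =>
    if h : 2 * j < 2 * d - 1 then
      (if j < k then tauG ⟨2 * j, h⟩ else tauG ⟨2 * j, h⟩ * sG ⟨2 * j, h⟩)
    else 1)).prod

/-- The class of `W_{d,k}` in the `d`-th Markov module: `[W_{d,k}, 2d]` for `d ≥ 1`, and the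
class `[W_{0,0}, 1]` of the trivial braid on one strand for `d = 0`. -/
def WclassD (d k : ℕ) : MarkovD d :=
  if hd : d = 0 then hd ▸ classD 0 1 one_pos 1
  else classD d (2 * d) (by omega) (W d k)

/-- The singular braid `α_0 τ_{i_1} α_1 τ_{i_2} ⋯ τ_{i_d} α_d`. -/
def sbWord {m d : ℕ} (α : Fin (d + 1) → SB m) (idx : Fin d → Fin (m - 1)) : SB m :=
  α 0 * ((List.ofFn fun j : Fin d => tauG (idx j) * α j.succ).prod)

/-- The singular braid `α_0 τ_{i_1} α_1 ⋯ τ_{i_{k-1}} α_{k-1} x α_k τ_{i_{k+1}} ⋯ τ_{i_d} α_d`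
obtained from `α_0 τ_{i_1} α_1 ⋯ τ_{i_d} α_d` by replacing the letter `τ_{i_k}` by `x`. -/
def sbWordRepl {m d : ℕ} (α : Fin (d + 1) → SB m) (idx : Fin d → Fin (m - 1))
    (k : Fin d) (x : SB m) : SB m :=
  α 0 * ((List.ofFn fun j : Fin d => (if j = k then x else tauG (idx j)) * α j.succ).prod)

/-- `RepGen false i = 1` (deleting a `τ` letter) and `RepGen true i = σ_{i+1}` (replacing a
`τ` letter by the corresponding `σ` letter). -/
def RepGen {m : ℕ} (ε : Bool) (i : Fin (m - 1)) : SB m := if ε then sG i else 1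

/-- `IsG d ε g` says that the linear map `g : Markov(⊔S_dB) → Markov(⊔S_{d-1}B)` is induced
by the family of maps `f_{n,ε}` (deletion of one `τ` letter for `ε = false`, replacement of one
`τ` letter by the corresponding `σ` letter for `ε = true`), i.e. that
`g([β,n]) = [f_{n,ε}(β), n]` for every singular braid `β ∈ S_dB_n`. -/
def IsG (d : ℕ) (ε : Bool) (g : MarkovD d →ₗ[Lqz] MarkovD (d - 1)) : Prop :=
  ∀ (m : ℕ) (hm : 0 < m) (α : Fin (d + 1) → SB m) (idx : Fin d → Fin (m - 1)),
    (∀ j, degM (α j) = Multiplicative.ofAdd 0) →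
    g (classD d m hm (sbWord α idx)) =
      ∑ k : Fin d, classD (d - 1) m hm (sbWordRepl α idx k (RepGen ε (idx k)))

/-- The `ℂ(q,z)`-vector space freely spanned by the set `S_dB_m` of singular braids on `m`
strands with `d` singular points. -/
abbrev FreeSd (m d : ℕ) : Type :=
  {β : SB m // degM β = Multiplicative.ofAdd d} →₀ Lqz

/-- The basis element of `ℂ(q,z)[S_dB_m]` corresponding to a braid `β ∈ S_dB_m` (defined to
be `0` if `β` does not have exactly `d` singular points). -/
def freeElem {m : ℕ} (d : ℕ) (β : SB m) : FreeSd m d :=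
  if h : degM β = Multiplicative.ofAdd d then Finsupp.single ⟨β, h⟩ 1 else 0

/-- Iterated product (power) with respect to a given bilinear multiplication. -/
def powAux (mul : Markov →ₗ[Lqz] Markov →ₗ[Lqz] Markov) (one x : Markov) : ℕ → Markov
  | 0 => one
  | k + 1 => mul x (powAux mul one x k)

/-! `W_{d,k}` is a product of `d` commuting blocks, one on each strand pair: `τ` on the first
`k` pairs and `τσ` on the others. Deleting the `τ` of the `j`-th block leaves a hole there,
trivial if `j < k` and a single crossing `σ` otherwise. Conjugating by the braids that exchange
adjacent strand pairs moves the hole to the last pair and the later blocks down by one pair.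
A trivial last pair is then removed by stabilization, leaving `W_{d-1,k-1}`, and a last pair
crossing once by a positive Markov move, leaving `z · W_{d-1,k}`; there are `k` holes of the
first kind and `d - k` of the second. -/

section Generators

variable {n : ℕ}

/- The generators indexed by natural numbers, with the junk value `1` outside `Fin (n - 1)`;
this keeps bound proofs out of the strand arithmetic below. -/
def sN (n i : ℕ) : SB n := if h : i < n - 1 then sG ⟨i, h⟩ else 1

def siN (n i : ℕ) : SB n := if h : i < n - 1 then sInvG ⟨i, h⟩ else 1

def tN (n i : ℕ) : SB n := if h : i < n - 1 then tauG ⟨i, h⟩ else 1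

theorem sN_mul_siN (i : ℕ) : sN n i * siN n i = 1 := by
  unfold sN siN
  split_ifs with h
  · simpa only [sG, sInvG, map_mul, map_one] using SB.sound (SBRel.inv_right ⟨i, h⟩)
  · exact one_mul 1

theorem siN_mul_sN (i : ℕ) : siN n i * sN n i = 1 := by
  unfold sN siN
  split_ifs with h
  · simpa only [sG, sInvG, map_mul, map_one] using SB.sound (SBRel.inv_left ⟨i, h⟩)
  · exact one_mul 1

def sigmaUnit (n i : ℕ) : (SB n)ˣ := ⟨sN n i, siN n i, sN_mul_siN i, siN_mul_sN i⟩

theorem commute_sN_sN {i j : ℕ} (h : i + 2 ≤ j ∨ j + 2 ≤ i) :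
    Commute (sN n i) (sN n j) := by
  unfold sN
  split_ifs with hi hj hj
  · simpa only [Commute, SemiconjBy, sG, map_mul] using
      SB.sound (SBRel.comm_ss ⟨i, hi⟩ ⟨j, hj⟩ h)
  all_goals simp

theorem commute_sN_tN {i j : ℕ} (h : i + 2 ≤ j ∨ j + 2 ≤ i) :
    Commute (sN n i) (tN n j) := by
  unfold sN tN
  split_ifs with hi hj hj
  · simpa only [Commute, SemiconjBy, sG, tauG, map_mul] using
      SB.sound (SBRel.comm_st ⟨i, hi⟩ ⟨j, hj⟩ h)
  all_goals simp

theorem semiconjBy_sN_braid {i : ℕ} (h : i + 1 < n - 1) :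
    SemiconjBy (sN n i * sN n (i + 1)) (sN n i) (sN n (i + 1)) := by
  have hi : i < n - 1 := by omega
  simpa only [SemiconjBy, sN, dif_pos h, dif_pos hi, sG, map_mul, mul_assoc] using
    SB.sound (SBRel.braid ⟨i, hi⟩ ⟨i + 1, h⟩ (Or.inl rfl))

theorem semiconjBy_sN_braid_symm {i : ℕ} (h : i + 1 < n - 1) :
    SemiconjBy (sN n (i + 1) * sN n i) (sN n (i + 1)) (sN n i) := by
  have hi : i < n - 1 := by omega
  simpa only [SemiconjBy, sN, dif_pos h, dif_pos hi, sG, map_mul, mul_assoc] using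
    (SB.sound (SBRel.braid ⟨i, hi⟩ ⟨i + 1, h⟩ (Or.inl rfl))).symm

theorem semiconjBy_tN_braid {i : ℕ} (h : i + 1 < n - 1) :
    SemiconjBy (sN n (i + 1) * sN n i) (tN n (i + 1)) (tN n i) := by
  have hi : i < n - 1 := by omega
  simpa only [SemiconjBy, sN, tN, dif_pos h, dif_pos hi, sG, tauG, map_mul, mul_assoc] using
    SB.sound (SBRel.braid_tau ⟨i + 1, h⟩ ⟨i, hi⟩ (Or.inr rfl))

end Generators

section PairSwap

variable {n : ℕ}

/- Conjugation by `pairSwap n p` exchanges the strand pairs `{2p+1, 2p+2}` and `{2p+3, 2p+4}`. -/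
def pairSwap (n p : ℕ) : (SB n)ˣ :=
  sigmaUnit n (2 * p + 1) * sigmaUnit n (2 * p) *
    (sigmaUnit n (2 * p + 2) * sigmaUnit n (2 * p + 1))

theorem coe_pairSwap (p : ℕ) : (pairSwap n p : SB n) =
    sN n (2 * p + 1) * sN n (2 * p) * (sN n (2 * p + 2) * sN n (2 * p + 1)) := rfl

theorem semiconjBy_pairSwap_sN {p : ℕ} (h : 2 * p + 2 < n - 1) :
    SemiconjBy (pairSwap n p : SB n) (sN n (2 * p + 2)) (sN n (2 * p)) :=
  coe_pairSwap p ▸ (semiconjBy_sN_braid_symm (by omega)).mul_left (semiconjBy_sN_braid_symm h)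

theorem semiconjBy_pairSwap_tN {p : ℕ} (h : 2 * p + 2 < n - 1) :
    SemiconjBy (pairSwap n p : SB n) (tN n (2 * p + 2)) (tN n (2 * p)) :=
  coe_pairSwap p ▸ (semiconjBy_tN_braid (by omega)).mul_left (semiconjBy_tN_braid h)

theorem semiconjBy_pairSwap_sN_symm {p : ℕ} (h : 2 * p + 2 < n - 1) :
    SemiconjBy (pairSwap n p : SB n) (sN n (2 * p)) (sN n (2 * p + 2)) := by
  have hV : (pairSwap n p : SB n) =
      sN n (2 * p + 1) * sN n (2 * p + 2) * (sN n (2 * p) * sN n (2 * p + 1)) := by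
    rw [coe_pairSwap, mul_assoc, ← mul_assoc (sN n (2 * p)),
      (commute_sN_sN (Or.inl le_rfl)).eq, mul_assoc, ← mul_assoc]
  exact hV ▸ (semiconjBy_sN_braid h).mul_left (semiconjBy_sN_braid (by omega))

theorem commute_pairSwap {p : ℕ} {x : SB n}
    (h : ∀ q, 2 * p ≤ q → q ≤ 2 * p + 2 → Commute (sN n q) x) :
    Commute (pairSwap n p : SB n) x := by
  rw [coe_pairSwap]
  exact ((h (2 * p + 1) (by omega) (by omega)).mul_left (h (2 * p) le_rfl (by omega))).mul_left
    ((h (2 * p + 2) (by omega) le_rfl).mul_left (h (2 * p + 1) (by omega) (by omega)))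

end PairSwap

section Blocks

variable {n : ℕ}

/- `blocks (2 * d) k 0 d` is `W_{d,k}` (`W_eq_blocks`); its `i`-th factor `block (2 * d) k i` is
`τ_{2i+1}` or `τ_{2i+1} σ_{2i+1}`, and `sigmaPart` is what is left of it once `τ` is deleted. -/
def sigmaPart (n k i : ℕ) : SB n := if i < k then 1 else sN n (2 * i)

def block (n k i : ℕ) : SB n := tN n (2 * i) * sigmaPart n k i

def blocks (n k a m : ℕ) : SB n := ((List.range' a m).map (block n k)).prod

theorem blocks_zero (k a : ℕ) : blocks n k a 0 = 1 := rfl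

theorem blocks_succ (k a m : ℕ) : blocks n k a (m + 1) = block n k a * blocks n k (a + 1) m := by
  rw [blocks, List.range'_succ, List.map_cons, List.prod_cons, blocks]

theorem blocks_succ' (k a m : ℕ) : blocks n k a (m + 1) = blocks n k a m * block n k (a + m) := by
  rw [blocks, List.range'_concat, List.map_append, List.prod_append, List.map_singleton,
    List.prod_singleton, Nat.one_mul, blocks]

theorem blocks_congr {k₁ k₂ a m : ℕ}
    (h : ∀ i, a ≤ i → i < a + m → (i < k₁ ↔ i < k₂)) :
    blocks n k₁ a m = blocks n k₂ a m := by
  refine congrArg List.prod (List.map_congr_left fun i hi => ?_)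
  rw [List.mem_range'_1] at hi
  simp only [block, sigmaPart, h i hi.1 hi.2]

theorem commute_sN_block {q k i : ℕ} (h : q + 2 ≤ 2 * i ∨ 2 * i + 2 ≤ q) :
    Commute (sN n q) (block n k i) := by
  refine (commute_sN_tN h).mul_right ?_
  unfold sigmaPart
  split_ifs
  · exact Commute.one_right _
  · exact commute_sN_sN h

theorem commute_pairSwap_blocks {p k a m : ℕ} (h : a + m ≤ p ∨ p + 2 ≤ a) :
    Commute (pairSwap n p : SB n) (blocks n k a m) := by
  refine Commute.list_prod_right _ _ fun x hx => ?_
  obtain ⟨i, hi, rfl⟩ := List.mem_map.1 hx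
  rw [List.mem_range'_1] at hi
  exact commute_pairSwap fun q _ _ => commute_sN_block (by omega)

theorem semiconjBy_pairSwap_block {p k₁ k₂ : ℕ} (h : 2 * p + 2 < n - 1)
    (hk : p + 1 < k₂ ↔ p < k₁) :
    SemiconjBy (pairSwap n p : SB n) (block n k₂ (p + 1)) (block n k₁ p) := by
  refine (semiconjBy_pairSwap_tN h).mul_right ?_
  unfold sigmaPart
  by_cases hp : p < k₁
  · rw [if_pos (hk.2 hp), if_pos hp]
    exact SemiconjBy.one_right _
  · rw [if_neg (mt hk.1 hp), if_neg hp]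
    exact semiconjBy_pairSwap_sN h

end Blocks

section MarkovClass

variable {n : ℕ}

theorem ofHZ_mul (a b : SB n) : ofHZ (a * b) = ofHZ a * ofHZ b := by
  simp only [ofHZ, heckeOf, map_mul, Algebra.TensorProduct.tmul_mul_tmul, mul_one]

theorem ofHZ_mem_HzSd {d : ℕ} {β : SB n} (h : degM β = Multiplicative.ofAdd d) :
    ofHZ β ∈ HzSd n d :=
  Submodule.subset_span ⟨β, h, rfl⟩

theorem iotaHZ_ofHZ (γ : SB n) :
    iotaHZ n (ofHZ γ) = ofHZ (inclSB (n + 1) (Nat.le_succ n) γ) := by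
  simp only [iotaHZ, ofHZ, Algebra.TensorProduct.map_tmul, AlgHom.coe_id, id_eq, heckeIncl,
    heckeOf, RingQuot.liftAlgHom_mkAlgHom_apply, AlgHom.coe_comp, Function.comp_apply,
    MonoidAlgebra.of_apply, MonoidAlgebra.mapDomainAlgHom_apply, MonoidAlgebra.mapDomain_single]

theorem degM_inclSB {N : ℕ} (h : n ≤ N) (γ : SB n) : degM (inclSB N h γ) = degM γ := by
  induction γ using Con.induction_on with
  | H w =>
    exact DFunLike.congr_fun (FreeMonoid.hom_eq (f := (degM.comp (inclSB N h)).comp SB.mk)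
      (g := degM.comp SB.mk) fun x => by cases x <;> rfl) w

theorem classD_mul_comm {d : ℕ} (hn : 0 < n) (a b : SB n) :
    classD d n hn (a * b) = classD d n hn (b * a) := by
  have hba : degM (b * a) = degM (a * b) := by rw [map_mul, map_mul, mul_comm]
  by_cases hab : degM (a * b) = Multiplicative.ofAdd d
  · simp only [classD, dif_pos hab, dif_pos (hba.trans hab)]
    rw [Submodule.Quotient.eq]
    have hdeg : (degM a).toAdd + (degM b).toAdd = d := by
      rw [← toAdd_mul, ← map_mul, hab, toAdd_ofAdd]
    refine Submodule.subset_span (Or.inl (Or.inl ⟨⟨n, hn⟩, _, _, hdeg, ofHZ a, ofHZ b,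
      ofHZ_mem_HzSd rfl, ofHZ_mem_HzSd rfl, ?_, ?_, ?_⟩))
    · exact ofHZ_mul a b ▸ ofHZ_mem_HzSd hab
    · exact ofHZ_mul b a ▸ ofHZ_mem_HzSd (hba.trans hab)
    · simp only [← ofHZ_mul]
  · simp only [classD, dif_neg hab, dif_neg (hba.trans_ne hab)]

theorem classD_eq_of_semiconjBy {d : ℕ} (hn : 0 < n) (u : (SB n)ˣ) {γ γ' : SB n}
    (h : SemiconjBy (u : SB n) γ γ') : classD d n hn γ' = classD d n hn γ := by
  rw [(Units.eq_mul_inv_iff_mul_eq u).2 h.eq.symm, classD_mul_comm, ← mul_assoc,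
    Units.inv_mul, one_mul]

theorem classD_inclSB_succ {d : ℕ} (hn : 0 < n) (γ : SB n) :
    classD d (n + 1) n.succ_pos (inclSB (n + 1) (Nat.le_succ n) γ) = classD d n hn γ := by
  by_cases hγ : degM γ = Multiplicative.ofAdd d
  · have hγ' := (degM_inclSB (Nat.le_succ n) γ).trans hγ
    simp only [classD, dif_pos hγ, dif_pos hγ']
    rw [eq_comm, Submodule.Quotient.eq]
    refine Submodule.subset_span (Or.inl (Or.inr ⟨⟨n, hn⟩, ofHZ γ, ofHZ_mem_HzSd hγ,
      iotaHZ_ofHZ γ ▸ ofHZ_mem_HzSd hγ', ?_⟩))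
    simp only [iotaHZ_ofHZ]
    rfl
  · simp only [classD, dif_neg hγ, dif_neg ((degM_inclSB (Nat.le_succ n) γ).trans_ne hγ)]

theorem classD_inclSB_succ_mul_sN {d : ℕ} (hn : 0 < n) (γ : SB n) :
    classD d (n + 1) n.succ_pos (inclSB (n + 1) (Nat.le_succ n) γ * sN (n + 1) (n - 1)) =
      zL • classD d n hn γ := by
  have hσ : sN (n + 1) (n - 1) = sigmaLast ⟨n, hn⟩ := dif_pos (by omega)
  have hdeg : degM (inclSB (n + 1) (Nat.le_succ n) γ * sN (n + 1) (n - 1)) = degM γ := by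
    rw [map_mul, degM_inclSB, hσ]
    exact mul_one _
  by_cases hγ : degM γ = Multiplicative.ofAdd d
  · have hofHZ : iotaHZ n (ofHZ γ) * ofHZ (sigmaLast ⟨n, hn⟩) =
        ofHZ (inclSB (n + 1) (Nat.le_succ n) γ * sN (n + 1) (n - 1)) := by
      rw [iotaHZ_ofHZ, ← ofHZ_mul, hσ]
    simp only [classD, dif_pos hγ, dif_pos (hdeg.trans hγ)]
    rw [← Submodule.Quotient.mk_smul, Submodule.Quotient.eq]
    refine Submodule.subset_span (Or.inr ⟨⟨n, hn⟩, ofHZ γ, ofHZ_mem_HzSd hγ,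
      hofHZ ▸ ofHZ_mem_HzSd (hdeg.trans hγ), ?_⟩)
    simp only [hofHZ]
    rfl
  · simp only [classD, dif_neg hγ, dif_neg (hdeg.trans_ne hγ), smul_zero]

end MarkovClass

section Stabilization

variable {n : ℕ}

theorem inclSB_sN {N : ℕ} (h : n ≤ N) {q : ℕ} (hq : q < n - 1) :
    inclSB N h (sN n q) = sN N q := by
  rw [sN, dif_pos hq, sN, dif_pos (by omega), inclSB_sG]
  exact congrArg sG (Fin.ext (Nat.zero_add q))

theorem inclSB_tN {N : ℕ} (h : n ≤ N) {q : ℕ} (hq : q < n - 1) :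
    inclSB N h (tN n q) = tN N q := by
  rw [tN, dif_pos hq, tN, dif_pos (by omega)]
  exact congrArg tauG (Fin.ext (Nat.zero_add q))

theorem inclSB_blocks {N : ℕ} (h : n ≤ N) {k p : ℕ} (hp : 2 * p ≤ n) :
    inclSB N h (blocks n k 0 p) = blocks N k 0 p := by
  rw [blocks, map_list_prod, List.map_map]
  refine congrArg List.prod (List.map_congr_left fun i hi => ?_)
  rw [List.mem_range'_1] at hi
  have hi' : 2 * i < n - 1 := by omega
  simp only [Function.comp_apply, block, sigmaPart, map_mul, inclSB_tN h hi']
  split_ifs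
  · exact congrArg _ (map_one _)
  · rw [inclSB_sN h hi']

theorem classD_blocks_of_le {d N k p : ℕ} (hn : 0 < n) (hp : 2 * p ≤ n) (hN : n ≤ N) :
    classD d N (by omega) (blocks N k 0 p) = classD d n hn (blocks n k 0 p) := by
  induction N, hN using Nat.le_induction with
  | base => rfl
  | succ N hnN ih =>
    rw [← ih, ← inclSB_blocks (Nat.le_succ N) (by omega), classD_inclSB_succ]

theorem W_eq_blocks (d k : ℕ) : W d k = blocks (2 * d) k 0 d := by
  rw [W, blocks, List.range_eq_range']
  refine congrArg List.prod (List.map_congr_left fun j hj => ?_)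
  rw [List.mem_range'_1] at hj
  have hj' : 2 * j < 2 * d - 1 := by omega
  simp only [dif_pos hj', block, sigmaPart, tN, sN]
  split_ifs <;> simp

theorem WclassD_eq_classD_blocks {e n : ℕ} (k : ℕ) (hn : 0 < n) (he : 2 * e ≤ n) :
    WclassD e k = classD e n hn (blocks n k 0 e) := by
  rcases Nat.eq_zero_or_pos e with rfl | he0
  · exact (classD_blocks_of_le (d := 0) (k := k) (p := 0) one_pos zero_le_one hn).symm
  · rw [WclassD, dif_neg he0.ne', W_eq_blocks]
    exact (classD_blocks_of_le (by omega) le_rfl he).symm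

theorem classD_blocks_mul_sN {d k p : ℕ} (hn : 0 < n) (hp : 2 * p ≤ n) :
    classD d (n + 1) n.succ_pos (blocks (n + 1) k 0 p * sN (n + 1) (n - 1)) =
      zL • classD d n hn (blocks n k 0 p) := by
  rw [← inclSB_blocks (Nat.le_succ n) hp, classD_inclSB_succ_mul_sN]

end Stabilization

section Bubble

variable {n : ℕ}

theorem classD_bubble {d k₁ k₂ : ℕ} (hn : 0 < n) (H : ℕ → SB n)
    (hH : ∀ q, 2 * q + 2 < n - 1 → SemiconjBy (pairSwap n q : SB n) (H q) (H (q + 1)))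
    (hHc : ∀ q, Commute (H (q + 1)) (block n k₁ q)) (m : ℕ) :
    ∀ p, (∀ q, p ≤ q → (q + 1 < k₂ ↔ q < k₁)) → 2 * (p + m) < n - 1 →
      classD d n hn (blocks n k₁ 0 p * (H p * blocks n k₂ (p + 1) m)) =
        classD d n hn (blocks n k₁ 0 (p + m) * H (p + m)) := by
  induction m with
  | zero => intro p _ _; rw [blocks_zero, mul_one, Nat.add_zero]
  | succ m ih =>
    intro p hk hpm
    have hV : 2 * p + 2 < n - 1 := by omega
    have hconj : SemiconjBy (pairSwap n p : SB n)
        (blocks n k₁ 0 p * (H p * (block n k₂ (p + 1) * blocks n k₂ (p + 2) m)))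
        (blocks n k₁ 0 p * (H (p + 1) * (block n k₁ p * blocks n k₂ (p + 2) m))) :=
      SemiconjBy.mul_right (commute_pairSwap_blocks (Or.inl (Nat.zero_add p).le))
        ((hH p hV).mul_right ((semiconjBy_pairSwap_block hV (hk p le_rfl)).mul_right
          (commute_pairSwap_blocks (Or.inr le_rfl))))
    have hreassoc : blocks n k₁ 0 p * (H (p + 1) * (block n k₁ p * blocks n k₂ (p + 2) m)) =
        blocks n k₁ 0 (p + 1) * (H (p + 1) * blocks n k₂ (p + 1 + 1) m) := by
      rw [← mul_assoc (H _), (hHc p).eq, blocks_succ', Nat.zero_add]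
      simp only [mul_assoc]
    rw [blocks_succ, ← classD_eq_of_semiconjBy hn _ hconj, hreassoc,
      ih (p + 1) (fun q hq => hk q (by omega)) (by omega), Nat.add_right_comm p 1 m,
      ← Nat.add_assoc]

end Bubble

section Words

theorem ofFn_val_eq_map_range {M : Type*} {d : ℕ} (g : ℕ → M) :
    List.ofFn (fun j : Fin d => g j) = (List.range d).map g := by
  rw [List.ofFn_eq_map, ← List.map_coe_finRange_eq_range, List.map_map]
  rfl

theorem prod_map_range'_eq_mul {M : Type*} [Monoid M] (f : ℕ → M) {j d : ℕ} (hj : j < d) :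
    ((List.range' 0 d).map f).prod =
      ((List.range' 0 j).map f).prod * (f j * ((List.range' (j + 1) (d - 1 - j)).map f).prod) := by
  obtain ⟨r, rfl⟩ : ∃ r, d = j + (r + 1) := ⟨d - 1 - j, by omega⟩
  rw [← List.range'_append, List.range'_succ, List.map_append, List.prod_append, List.map_cons,
    List.prod_cons, Nat.zero_add, Nat.one_mul, show j + (r + 1) - 1 - j = r by omega]

def gapBraid (d k : ℕ) : Fin (d + 1) → SB (2 * d) := Fin.cons 1 fun i => sigmaPart (2 * d) k i

def tauIndex (d : ℕ) : Fin d → Fin (2 * d - 1) := fun j => ⟨2 * j, by omega⟩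

theorem tauG_tauIndex {d : ℕ} (j : Fin d) : tauG (tauIndex d j) = tN (2 * d) (2 * j) := by
  rw [tN, dif_pos (by omega)]
  rfl

theorem degM_gapBraid (d k : ℕ) (j : Fin (d + 1)) :
    degM (gapBraid d k j) = Multiplicative.ofAdd 0 := by
  refine Fin.cases rfl (fun i => ?_) j
  simp only [gapBraid, Fin.cons_succ, sigmaPart, sN]
  split_ifs <;> rfl

theorem sbWord_gapBraid (d k : ℕ) : sbWord (gapBraid d k) (tauIndex d) = W d k := by
  rw [sbWord, W_eq_blocks, gapBraid, Fin.cons_zero, one_mul, blocks, ← List.range_eq_range',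
    ← ofFn_val_eq_map_range]
  simp only [Fin.cons_succ, tauG_tauIndex, block]

theorem sbWordRepl_gapBraid (d k : ℕ) (j : Fin d) :
    sbWordRepl (gapBraid d k) (tauIndex d) j 1 =
      blocks (2 * d) k 0 j *
        (sigmaPart (2 * d) k j * blocks (2 * d) k ((j : ℕ) + 1) (d - 1 - j)) := by
  set g : ℕ → SB (2 * d) := fun i =>
    if i = (j : ℕ) then sigmaPart (2 * d) k i else block (2 * d) k i
  have hword : sbWordRepl (gapBraid d k) (tauIndex d) j 1 = ((List.range' 0 d).map g).prod := by
    rw [sbWordRepl, gapBraid, Fin.cons_zero, one_mul, ← List.range_eq_range',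
      ← ofFn_val_eq_map_range]
    refine congrArg List.prod (List.ofFn_inj.2 (funext fun i => ?_))
    simp only [Fin.cons_succ, tauG_tauIndex, g, block, Fin.ext_iff]
    split_ifs <;> simp
  have hblocks : ∀ a m, (∀ i, a ≤ i → i < a + m → i ≠ (j : ℕ)) →
      ((List.range' a m).map g).prod = blocks (2 * d) k a m := fun a m h =>
    congrArg List.prod (List.map_congr_left fun i hi =>
      if_neg (h i (List.mem_range'_1.1 hi).1 (List.mem_range'_1.1 hi).2))
  rw [hword, prod_map_range'_eq_mul g j.2, hblocks 0 j (fun i _ hi => by omega),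
    hblocks (j + 1) (d - 1 - j) (fun i hi _ => by omega)]
  simp only [g, if_pos]

end Words

theorem classD_sbWordRepl_gapBraid {e k : ℕ} (j : Fin (e + 1)) :
    classD e (2 * (e + 1)) (by omega) (sbWordRepl (gapBraid (e + 1) k) (tauIndex (e + 1)) j 1) =
      if (j : ℕ) < k then WclassD e (k - 1) else zL • WclassD e k := by
  have hn : 0 < 2 * (e + 1) := by omega
  have hm : j + (e + 1 - 1 - j) = e := by omega
  rw [sbWordRepl_gapBraid, sigmaPart]
  split_ifs with hjk
  · rw [blocks_congr (k₂ := k - 1) fun i _ hi => by omega,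
      classD_bubble hn (fun _ => 1) (k₁ := k - 1) (fun _ _ => SemiconjBy.one_right _)
        (fun _ => Commute.one_left _) _ j (fun q _ => by omega) (by omega),
      hm, mul_one, ← WclassD_eq_classD_blocks _ _ (by omega)]
  · rw [classD_bubble hn (fun p => sN (2 * (e + 1)) (2 * p)) (k₁ := k)
        (fun _ hq => semiconjBy_pairSwap_sN_symm hq) (fun _ => commute_sN_block (by omega)) _ j
        (fun _ _ => iff_of_false (by omega) (by omega)) (by omega), hm,
      WclassD_eq_classD_blocks k (n := 2 * e + 1) (by omega) (by omega)]
    exact classD_blocks_mul_sN (n := 2 * e + 1) (by omega) (by omega)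

theorem sum_fin_ite_lt {M : Type*} [AddCommMonoid M] {d k : ℕ} (hk : k ≤ d) (a b : M) :
    ∑ j : Fin d, (if (j : ℕ) < k then a else b) = k • a + (d - k) • b := by
  rw [Fin.sum_univ_eq_sum_range (fun i => if i < k then a else b), Finset.range_eq_Ico,
    ← Finset.sum_Ico_consecutive _ (Nat.zero_le k) hk,
    Finset.sum_congr rfl fun i hi => if_pos (Finset.mem_Ico.1 hi).2,
    Finset.sum_congr rfl fun i hi => if_neg (Finset.mem_Ico.1 hi).1.not_gt,
    Finset.sum_const, Finset.sum_const, Nat.card_Ico, Nat.card_Ico, Nat.sub_zero]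

/-- For every `d ≥ 1` and `0 ≤ k ≤ d`,
`g_0([W_{d,k}, 2d]) = k·[W_{d-1,k-1}, 2(d-1)] + z·(d-k)·[W_{d-1,k}, 2(d-1)]`
in `Markov(⊔S_{d-1}B)`. -/
theorem g0_apply_wclass (d : ℕ) (hd : 1 ≤ d) (k : ℕ) (hk : k ≤ d)
    (g0 : MarkovD d →ₗ[Lqz] MarkovD (d - 1)) (h0 : IsG d false g0) :
    g0 (WclassD d k) =
      (k : Lqz) • WclassD (d - 1) (k - 1) +
      (((d - k : ℕ) : Lqz) * zL) • WclassD (d - 1) k := by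
  obtain ⟨e, rfl⟩ : ∃ e, d = e + 1 := ⟨d - 1, by omega⟩
  calc g0 (WclassD (e + 1) k)
      = g0 (classD (e + 1) (2 * (e + 1)) (by omega)
          (sbWord (gapBraid (e + 1) k) (tauIndex (e + 1)))) := by
        rw [sbWord_gapBraid]
        rfl
    _ = ∑ j : Fin (e + 1), (if (j : ℕ) < k then WclassD e (k - 1) else zL • WclassD e k) :=
        (h0 _ _ _ _ (degM_gapBraid (e + 1) k)).trans
          (Finset.sum_congr rfl fun j _ => classD_sbWordRepl_gapBraid j)
    _ = (k : Lqz) • WclassD e (k - 1) + (((e + 1 - k : ℕ) : Lqz) * zL) • WclassD e k := by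
        rw [sum_fin_ite_lt hk, ← Nat.cast_smul_eq_nsmul Lqz, ← Nat.cast_smul_eq_nsmul Lqz,
          mul_smul]

end
end SingularHOMFLYPT
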